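/- arXiv:2003.02019 — 2 statements merged into one kernel-verified Lean document; each statement's English description precedes it below -/
import Mathlib

section
/- Let f : 𝔻 → 𝔻 be holomorphic with f(z) = z + o(|1-z|³) as z → 1 nontangentially (i.e. for every M > 1, (f(z)-z)/|1-z|³ → 0 as z → 1 with |1-z| ≤ M(1-|z|)). Then f^h(z) = 1 + o(|1-z|²) as z → 1 nontangentially (i.e. for every M > 1, (f^h(z)-1)/|1-z|² → 0 as z → 1 with |1-z| ≤ M(1-|z|)). -/
open Complex Filter MeasureTheory Metric Set Topology

noncomputable section

/-- The open unit disk in `ℂ`. -/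
def unitDisk : Set ℂ := {z : ℂ | ‖z‖ < 1}

/-- The Laplacian of a real-valued function on `ℂ ≅ ℝ²`. -/
def lap (u : ℂ → ℝ) (z : ℂ) : ℝ :=
  fderiv ℝ (fun w => fderiv ℝ u w 1) z 1 +
  fderiv ℝ (fun w => fderiv ℝ u w Complex.I) z Complex.I

/-- The Gauss curvature `κ_λ = -Δ(log λ)/λ²` of a conformal pseudometric `λ(z)|dz|`. -/
def curv (lam : ℂ → ℝ) (z : ℂ) : ℝ :=
  -(lap (fun w => Real.log (lam w)) z) / (lam z) ^ 2

/-- A conformal pseudometric on the unit disk: continuous, nonnegative, and C² where positive. -/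
structure IsConfPseudometric (lam : ℂ → ℝ) : Prop where
  cont : ContinuousOn lam unitDisk
  nonneg : ∀ z ∈ unitDisk, 0 ≤ lam z
  smooth : ContDiffOn ℝ 2 lam {z : ℂ | z ∈ unitDisk ∧ 0 < lam z}

/-- The hyperbolic distortion `f^h(z) = (1-|z|²)|f'(z)|/(1-|f(z)|²)`. -/
def fh (f : ℂ → ℂ) (z : ℂ) : ℝ :=
  (1 - ‖z‖ ^ 2) * ‖deriv f z‖ / (1 - ‖f z‖ ^ 2)

/-- The Stolz angle at `1` with aperture `M`: `{z ∈ 𝔻 : |1-z| ≤ M(1-|z|)}`. -/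
def stolz (M : ℝ) : Set ℂ :=
  {z : ℂ | z ∈ unitDisk ∧ ‖1 - z‖ ≤ M * (1 - ‖z‖)}

/-!
A point `z` of the Stolz angle of aperture `M` is the centre of a disk of radius `‖1 - z‖ / (2M)`
inside the Stolz angle of aperture `3M`, on which `f(w) - w = o(‖1 - z‖³)`. Cauchy's estimate on
that disk gives `f'(z) - 1 = o(‖1 - z‖²)`. Since moreover `‖f z‖ - ‖z‖ = o(‖1 - z‖³)` and
`1 - ‖z‖² ≍ ‖1 - z‖` in a Stolz angle, the numerator of `f^h(z) - 1 = (s ‖f'(z)‖ - t) / t` with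
`s = 1 - ‖z‖²`, `t = 1 - ‖f z‖²` is `o(‖1 - z‖³)` while `t ≍ ‖1 - z‖`.
-/

open Asymptotics

lemma unitDisk_eq_ball : unitDisk = ball (0 : ℂ) 1 := by
  ext z; simp [unitDisk]

lemma isOpen_unitDisk : IsOpen unitDisk := unitDisk_eq_ball ▸ isOpen_ball

lemma one_sub_norm_le_norm_one_sub (z : ℂ) : 1 - ‖z‖ ≤ ‖1 - z‖ := by
  simpa using norm_sub_norm_le (1 : ℂ) z

lemma norm_one_sub_pos_of_mem_stolz {M : ℝ} {z : ℂ} (hz : z ∈ stolz M) : 0 < ‖1 - z‖ := by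
  refine norm_pos_iff.mpr (sub_ne_zero.mpr fun h => ?_)
  simpa [← h, unitDisk] using hz.1

lemma div_le_one_sub_norm_sq_of_mem_stolz {M : ℝ} (hM : 0 < M) {z : ℂ} (hz : z ∈ stolz M) :
    ‖1 - z‖ / M ≤ 1 - ‖z‖ ^ 2 := by
  have hz1 : ‖z‖ < 1 := hz.1
  rw [div_le_iff₀ hM]
  nlinarith [hz.2, mul_nonneg hM.le (mul_nonneg (norm_nonneg z) (sub_nonneg.2 hz1.le))]

lemma one_sub_norm_sq_le_of_mem_unitDisk {z : ℂ} (hz : z ∈ unitDisk) :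
    1 - ‖z‖ ^ 2 ≤ 2 * ‖1 - z‖ := by
  have hz1 : ‖z‖ < 1 := hz
  nlinarith [one_sub_norm_le_norm_one_sub z, norm_nonneg z]

lemma mem_stolz_of_mem_ball {M : ℝ} (hM : 1 ≤ M) {z w : ℂ} (hz : z ∈ stolz M)
    (hw : w ∈ ball z (‖1 - z‖ / (2 * M))) : w ∈ stolz (3 * M) ∧ ‖1 - w‖ ≤ 2 * ‖1 - z‖ := by
  set a := ‖1 - z‖
  have ha : 0 < a := norm_one_sub_pos_of_mem_stolz hz
  have hwz : ‖w - z‖ < a / (2 * M) := by rwa [mem_ball, dist_eq_norm] at hw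
  have hr : a / (2 * M) ≤ a / 2 := div_le_div_of_nonneg_left ha.le two_pos (by linarith)
  have hdist : ‖1 - w‖ < a + a / (2 * M) := by
    calc ‖1 - w‖ = ‖(1 - z) - (w - z)‖ := by ring_nf
      _ ≤ a + ‖w - z‖ := norm_sub_le _ _
      _ < a + a / (2 * M) := by linarith
  have hnorm : a / (2 * M) < 1 - ‖w‖ := by
    have hzw : ‖w‖ ≤ ‖z‖ + ‖w - z‖ := by simpa using norm_add_le z (w - z)
    have hzM : a / M ≤ 1 - ‖z‖ := by rw [div_le_iff₀ (by linarith)]; linarith [hz.2]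
    have : a / M = 2 * (a / (2 * M)) := by field_simp
    linarith
  refine ⟨⟨?_, ?_⟩, by linarith⟩
  · show ‖w‖ < 1
    linarith [div_pos ha (by linarith : (0 : ℝ) < 2 * M)]
  · have : 3 * M * (a / (2 * M)) = 3 / 2 * a := by field_simp
    nlinarith

lemma eventually_forall_mem_ball_of_eventually {M : ℝ} (hM : 1 ≤ M) {p : ℂ → Prop}
    (hp : ∀ᶠ w in 𝓝[stolz (3 * M)] 1, p w) :
    ∀ᶠ z in 𝓝[stolz M] 1, ∀ w ∈ ball z (‖1 - z‖ / (2 * M)), p w := by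
  obtain ⟨δ, hδ, hsub⟩ := Metric.mem_nhdsWithin_iff.mp hp
  refine Metric.mem_nhdsWithin_iff.mpr ⟨δ / 2, half_pos hδ, fun z ⟨hzδ, hz⟩ w hw => ?_⟩
  obtain ⟨hws, hw1⟩ := mem_stolz_of_mem_ball hM hz hw
  have hz1 : ‖1 - z‖ < δ / 2 := by rwa [mem_ball, dist_eq_norm, norm_sub_rev] at hzδ
  refine hsub ⟨?_, hws⟩
  rw [mem_ball, dist_eq_norm, norm_sub_rev]
  linarith

lemma norm_deriv_le_of_forall_mem_ball_norm_le {E : Type*} [NormedAddCommGroup E]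
    [NormedSpace ℂ E] {g : ℂ → E} {z : ℂ} {r K : ℝ} (hr : 0 < r)
    (hd : DifferentiableOn ℂ g (ball z r)) (hK : ∀ w ∈ ball z r, ‖g w‖ ≤ K) :
    ‖deriv g z‖ ≤ 2 * K / r := by
  refine Complex.norm_deriv_le_div_of_mapsTo_ball hd (fun w hw => ?_) hr
  rw [mem_closedBall, dist_eq_norm]
  linarith [norm_sub_le (g w) (g z), hK w hw, hK z (mem_ball_self hr)]

theorem isLittleO_deriv_of_isLittleO_stolz {M : ℝ} (hM : 1 ≤ M) {g : ℂ → ℂ}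
    (hg : DifferentiableOn ℂ g unitDisk)
    (ho : g =o[𝓝[stolz (3 * M)] 1] fun w => ‖1 - w‖ ^ 3) :
    deriv g =o[𝓝[stolz M] 1] fun z => ‖1 - z‖ ^ 2 := by
  rw [isLittleO_iff]
  intro c hc
  have hc' : 0 < c / (32 * M) := by positivity
  filter_upwards [eventually_forall_mem_ball_of_eventually hM (ho.def hc'),
    self_mem_nhdsWithin] with z hball hz
  set a := ‖1 - z‖
  have ha : 0 < a := norm_one_sub_pos_of_mem_stolz hz
  have hsub : ball z (a / (2 * M)) ⊆ unitDisk := fun w hw => (mem_stolz_of_mem_ball hM hz hw).1.1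
  have hbound : ∀ w ∈ ball z (a / (2 * M)), ‖g w‖ ≤ c / (32 * M) * (2 * a) ^ 3 := by
    intro w hw
    have h2a := (mem_stolz_of_mem_ball hM hz hw).2
    calc ‖g w‖ ≤ c / (32 * M) * ‖‖1 - w‖ ^ 3‖ := hball w hw
      _ ≤ c / (32 * M) * (2 * a) ^ 3 := by
        rw [norm_pow, norm_norm]; gcongr
  calc ‖deriv g z‖ ≤ 2 * (c / (32 * M) * (2 * a) ^ 3) / (a / (2 * M)) :=
        norm_deriv_le_of_forall_mem_ball_norm_le (by positivity) (hg.mono hsub) hbound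
    _ = c * ‖a ^ 2‖ := by
        rw [Real.norm_of_nonneg (by positivity)]; field_simp; ring

lemma isLittleO_of_tendsto_div_stolz {M : ℝ} {g : ℂ → ℂ}
    (h : Tendsto (fun z => g z / ((‖1 - z‖ : ℂ)) ^ 3) (𝓝[stolz M] 1) (𝓝 0)) :
    g =o[𝓝[stolz M] 1] fun z => ‖1 - z‖ ^ 3 := by
  have hne : ∀ᶠ z in 𝓝[stolz M] 1, ((‖1 - z‖ : ℂ)) ^ 3 = 0 → g z = 0 := by
    filter_upwards [self_mem_nhdsWithin] with z hz h0
    exact absurd h0 (pow_ne_zero 3 (ofReal_ne_zero.mpr (norm_one_sub_pos_of_mem_stolz hz).ne'))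
  have := ((isLittleO_iff_tendsto' hne).mpr h).norm_right
  simpa only [norm_pow, norm_real, norm_norm] using this

lemma isLittleO_norm_sq_sub_norm_sq {f : ℂ → ℂ} {l : Filter ℂ} {φ : ℂ → ℝ}
    (hmaps : MapsTo f unitDisk unitDisk) (hl : ∀ᶠ z in l, z ∈ unitDisk)
    (hclose : (fun z => f z - z) =o[l] φ) :
    (fun z => ‖f z‖ ^ 2 - ‖z‖ ^ 2) =o[l] φ := by
  refine (IsBigO.of_bound 2 ?_).trans_isLittleO hclose
  filter_upwards [hl] with z hz
  have hfz : ‖f z‖ < 1 := hmaps hz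
  have hz1 : ‖z‖ < 1 := hz
  calc ‖‖f z‖ ^ 2 - ‖z‖ ^ 2‖ = |‖f z‖ - ‖z‖| * (‖f z‖ + ‖z‖) := by
        rw [Real.norm_eq_abs, sq_sub_sq, abs_mul, mul_comm,
          abs_of_nonneg (add_nonneg (norm_nonneg (f z)) (norm_nonneg z))]
    _ ≤ ‖f z - z‖ * 2 := by
        gcongr
        · exact abs_norm_sub_norm_le _ _
        · linarith
    _ = 2 * ‖f z - z‖ := mul_comm _ _

lemma eventually_div_le_one_sub_norm_sq {f : ℂ → ℂ} {M : ℝ} (hM : 0 < M)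
    (hsq : (fun z => ‖f z‖ ^ 2 - ‖z‖ ^ 2) =o[𝓝[stolz M] 1] fun z => ‖1 - z‖ ^ 3) :
    ∀ᶠ z in 𝓝[stolz M] 1, ‖1 - z‖ / (2 * M) ≤ 1 - ‖f z‖ ^ 2 := by
  filter_upwards [hsq.def (by positivity : 0 < 1 / (2 * M)), self_mem_nhdsWithin,
    mem_nhdsWithin_of_mem_nhds (ball_mem_nhds (1 : ℂ) one_pos)] with z hbound hz hz1
  have ha1 : ‖1 - z‖ < 1 := by rwa [mem_ball, dist_eq_norm, norm_sub_rev] at hz1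
  have ha3 : ‖1 - z‖ ^ 3 ≤ ‖1 - z‖ := by
    nlinarith [pow_le_one₀ (norm_nonneg (1 - z)) ha1.le (n := 2), norm_nonneg (1 - z)]
  have hs := div_le_one_sub_norm_sq_of_mem_stolz hM hz
  have hhalf : ‖1 - z‖ / M = 2 * (‖1 - z‖ / (2 * M)) := by field_simp
  rw [Real.norm_eq_abs, norm_pow, norm_norm] at hbound
  have : 1 / (2 * M) * ‖1 - z‖ ^ 3 ≤ ‖1 - z‖ / (2 * M) := by
    rw [one_div_mul_eq_div]; gcongr
  linarith [le_abs_self (‖f z‖ ^ 2 - ‖z‖ ^ 2)]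

/-- With `s = 1 - ‖z‖²` and `t = 1 - ‖f z‖²`, `f^h - 1 = (s (‖f'‖ - 1) + (s - t)) / t`. -/
theorem isLittleO_fh_sub_one {f : ℂ → ℂ} {M : ℝ} (hM : 0 < M)
    (hmaps : MapsTo f unitDisk unitDisk)
    (hderiv : (fun z => deriv f z - 1) =o[𝓝[stolz M] 1] fun z => ‖1 - z‖ ^ 2)
    (hclose : (fun z => f z - z) =o[𝓝[stolz M] 1] fun z => ‖1 - z‖ ^ 3) :
    (fun z => fh f z - 1) =o[𝓝[stolz M] 1] fun z => ‖1 - z‖ ^ 2 := by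
  set l := 𝓝[stolz M] 1
  have hdisk : ∀ᶠ z in l, z ∈ unitDisk := eventually_mem_nhdsWithin.mono fun z hz => hz.1
  have hsq := isLittleO_norm_sq_sub_norm_sq hmaps hdisk hclose
  have ht := eventually_div_le_one_sub_norm_sq hM hsq
  have hs : (fun z => 1 - ‖z‖ ^ 2) =O[l] fun z => ‖1 - z‖ := by
    refine IsBigO.of_bound 2 ?_
    filter_upwards [hdisk] with z hz
    have hz1 : ‖z‖ < 1 := hz
    rw [Real.norm_of_nonneg (by nlinarith [norm_nonneg z]), norm_norm]
    exact one_sub_norm_sq_le_of_mem_unitDisk hz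
  have hd : (fun z => ‖deriv f z‖ - 1) =O[l] fun z => deriv f z - 1 :=
    IsBigO.of_bound 1 (Eventually.of_forall fun z => by
      simpa using abs_norm_sub_norm_le (deriv f z) 1)
  have hprod : (fun z => (1 - ‖z‖ ^ 2) * (‖deriv f z‖ - 1)) =o[l] fun z => ‖1 - z‖ ^ 3 :=
    (hs.mul_isLittleO (hd.trans_isLittleO hderiv)).congr_right fun z => by ring
  have hnum : (fun z => (1 - ‖z‖ ^ 2) * ‖deriv f z‖ - (1 - ‖f z‖ ^ 2)) =o[l]
      fun z => ‖1 - z‖ ^ 3 :=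
    (hprod.add hsq).congr_left fun z => by ring
  have hinv : (fun z => (1 - ‖f z‖ ^ 2)⁻¹) =O[l] fun z => (‖1 - z‖)⁻¹ := by
    refine IsBigO.of_bound (2 * M) ?_
    filter_upwards [ht, self_mem_nhdsWithin] with z ht hz
    have ha := norm_one_sub_pos_of_mem_stolz hz
    have htpos : 0 < 1 - ‖f z‖ ^ 2 := lt_of_lt_of_le (by positivity) ht
    rw [norm_inv, norm_inv, Real.norm_of_nonneg htpos.le, norm_norm, ← div_eq_mul_inv]
    calc (1 - ‖f z‖ ^ 2)⁻¹ ≤ (‖1 - z‖ / (2 * M))⁻¹ := inv_anti₀ (by positivity) ht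
      _ = 2 * M / ‖1 - z‖ := inv_div _ _
  refine (hnum.mul_isBigO hinv).congr' ?_ ?_
  · filter_upwards [ht, self_mem_nhdsWithin] with z ht hz
    have ha := norm_one_sub_pos_of_mem_stolz hz
    have htpos : 0 < 1 - ‖f z‖ ^ 2 := lt_of_lt_of_le (by positivity) ht
    rw [fh, ← div_eq_mul_inv, div_sub_one htpos.ne']
  · filter_upwards [self_mem_nhdsWithin] with z hz
    have ha := (norm_one_sub_pos_of_mem_stolz hz).ne'
    field_simp

/-- **From Burns–Krantz-type asymptotics to Schwarz–Pick-type asymptotics.**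
If `f : 𝔻 → 𝔻` is holomorphic and `f(z) = z + o(|1-z|³)` as `z → 1` nontangentially,
then `f^h(z) = 1 + o(|1-z|²)` as `z → 1` nontangentially. -/
theorem nontangential_distortion_estimate
    (f : ℂ → ℂ) (hf : DifferentiableOn ℂ f unitDisk)
    (hmaps : Set.MapsTo f unitDisk unitDisk)
    (ho : ∀ M : ℝ, 1 < M →
      Tendsto (fun z => (f z - z) / ((‖1 - z‖ : ℂ)) ^ 3)
        (nhdsWithin 1 (stolz M)) (𝓝 0)) :
    ∀ M : ℝ, 1 < M →
      Tendsto (fun z => (fh f z - 1) / ‖1 - z‖ ^ 2)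
        (nhdsWithin 1 (stolz M)) (𝓝 0) := by
  intro M hM
  have hclose : ∀ N, 1 < N → (fun z => f z - z) =o[𝓝[stolz N] 1] fun z => ‖1 - z‖ ^ 3 :=
    fun N hN => isLittleO_of_tendsto_div_stolz (ho N hN)
  have hderiv : (fun z => deriv f z - 1) =o[𝓝[stolz M] 1] fun z => ‖1 - z‖ ^ 2 := by
    refine (isLittleO_deriv_of_isLittleO_stolz hM.le (hf.sub differentiableOn_id)
      (hclose (3 * M) (by linarith))).congr' ?_ EventuallyEq.rfl
    filter_upwards [self_mem_nhdsWithin] with z hz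
    have hfz := hf.differentiableAt (isOpen_unitDisk.mem_nhds hz.1)
    exact (hfz.hasDerivAt.sub (hasDerivAt_id z)).deriv
  exact (isLittleO_fh_sub_one (by linarith) hmaps hderiv (hclose M hM)).tendsto_div_nhds_zero
end
end

section
/- For β > 0 define μ_β(z) := (1+β)|z|^β/(1 - |z|^{2(1+β)}) on 𝔻. Then μ_β is a conformal pseudometric on 𝔻 with constant curvature -4 and an isolated zero of order β at 0, and it is maximal among such pseudometrics: every conformal pseudometric λ on 𝔻 with κ_λ ≤ -4 that has a zero of order β at 0 satisfies λ(z) ≤ μ_β(z) for all z ∈ 𝔻. -/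
open Complex Filter MeasureTheory Metric Set Topology

noncomputable section

/-- `ξ` is a zero of order `α` of the conformal pseudometric `lam`:
order `0` means `lam ξ ≠ 0`; order `α > 0` means `lim_{z→ξ} lam z/|z-ξ|^α`
exists and is nonzero. -/
def HasZeroOrder (lam : ℂ → ℝ) (ξ : ℂ) (α : ℝ) : Prop :=
  (α = 0 ∧ lam ξ ≠ 0) ∨
  (0 < α ∧ lam ξ = 0 ∧ ∃ L : ℝ, L ≠ 0 ∧
    Filter.Tendsto (fun z => lam z / ‖z - ξ‖ ^ α)
      (nhdsWithin ξ {ξ}ᶜ) (nhds L))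

/-- All zeros of `lam` in the unit disk are isolated. -/
def IsolatedZeros (lam : ℂ → ℝ) : Prop :=
  ∀ ξ ∈ unitDisk, lam ξ = 0 → ∀ᶠ w in nhdsWithin ξ {ξ}ᶜ, lam w ≠ 0

/-- The maximal conformal pseudometric with curvature `-4` and a zero of order `β` at `0`:
`μ_β(z) = (1+β)|z|^β/(1-|z|^{2(1+β)})`. -/
def muBeta (β : ℝ) (z : ℂ) : ℝ :=
  (1 + β) * ‖z‖ ^ β / (1 - ‖z‖ ^ (2 * (1 + β)))

/-!
Ahlfors' argument. The rescaled metric `μ_{β,r}(z) = μ_β(z/r)/r` has curvature `-4` on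
`0 < |z| < r` and tends to `∞` at `|z| = r`. For a competitor `λ`, the function
`u = log (λ/μ_{β,r}) + δ log |z|` with `δ > 0` tends to `-∞` at every boundary point of
`Ω = {0 < |z| < r, λ > 0}`: at `0` because both metrics vanish to order `β`, so `λ/μ_{β,r}` stays
bounded while `δ log |z| → -∞`; at the zeros of `λ` because `log λ → -∞`; and on `|z| = r` because
`μ_{β,r} → ∞` while `λ` is bounded. Hence `u` attains its maximum in `Ω`, where
`0 ≥ Δu = Δ log λ - 4 μ_{β,r}² ≥ 4 (λ² - μ_{β,r}²)`. So `λ ≤ μ_{β,r}` at the maximum point, hence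
`u ≤ 0` throughout `Ω`; letting `δ → 0` and then `r → 1` gives `λ ≤ μ_β`.
-/

open Laplacian InnerProductSpace

lemma deriv_deriv_nonpos_of_isLocalMax {g : ℝ → ℝ} {x : ℝ} (hg : ContinuousAt g x)
    (hmax : IsLocalMax g x) : deriv (deriv g) x ≤ 0 := by
  by_contra! hpos
  have hmin : IsLocalMin g x := isLocalMin_of_deriv_deriv_pos hpos hmax.deriv_eq_zero hg
  have hconst : g =ᶠ[𝓝 x] fun _ => g x := by
    filter_upwards [hmin, hmax] with y h₁ h₂ using le_antisymm h₂ h₁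
  have hderiv : deriv g =ᶠ[𝓝 x] fun _ => 0 := by
    filter_upwards [hconst.eventuallyEq_nhds] with y hy using by rw [hy.deriv_eq, deriv_const]
  rw [hderiv.deriv_eq, deriv_const] at hpos
  exact lt_irrefl 0 hpos

section Laplacian

variable {f g : ℂ → ℝ} {z : ℂ}

lemma lap_eq_of_fderiv_eventuallyEq {D : ℂ → ℂ →L[ℝ] ℝ} (hD : fderiv ℝ f =ᶠ[𝓝 z] D) :
    lap f z = fderiv ℝ (fun w => D w 1) z 1 + fderiv ℝ (fun w => D w Complex.I) z Complex.I := by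
  have h₁ : (fun w => fderiv ℝ f w 1) =ᶠ[𝓝 z] fun w => D w 1 := hD.fun_comp (· 1)
  have h₂ : (fun w => fderiv ℝ f w Complex.I) =ᶠ[𝓝 z] fun w => D w Complex.I :=
    hD.fun_comp (· Complex.I)
  rw [lap, h₁.fderiv_eq, h₂.fderiv_eq]

lemma lap_congr (h : f =ᶠ[𝓝 z] g) : lap f z = lap g z :=
  lap_eq_of_fderiv_eventuallyEq h.fderiv

lemma lap_eq_of_hasFDerivAt {D : ℂ → ℂ →L[ℝ] ℝ} {L₁ L₂ : ℂ →L[ℝ] ℝ}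
    (h : ∀ᶠ w in 𝓝 z, HasFDerivAt f (D w) w)
    (h₁ : HasFDerivAt (fun w => D w 1) L₁ z) (h₂ : HasFDerivAt (fun w => D w Complex.I) L₂ z) :
    lap f z = L₁ 1 + L₂ Complex.I := by
  rw [lap_eq_of_fderiv_eventuallyEq (h.mono fun w hw => hw.fderiv), h₁.fderiv, h₂.fderiv]

lemma fderiv_fderiv_apply_eq (hf : ContDiffAt ℝ 2 f z) (v : ℂ) :
    fderiv ℝ (fun w => fderiv ℝ f w v) z v = fderiv ℝ (fderiv ℝ f) z v v := by
  have hD : DifferentiableAt ℝ (fderiv ℝ f) z :=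
    (hf.fderiv_right (m := 1) le_rfl).differentiableAt one_ne_zero
  rw [fderiv_clm_apply hD (differentiableAt_const v)]
  simp

lemma lap_eq_laplacian (hf : ContDiffAt ℝ 2 f z) : lap f z = Δ f z := by
  simp only [laplacian_eq_iteratedFDeriv_complexPlane, iteratedFDeriv_two_apply, lap,
    fderiv_fderiv_apply_eq hf]
  rfl

lemma lap_log_norm (hz : z ≠ 0) : lap (fun w => Real.log ‖w‖) z = 0 := by
  have h : HarmonicAt (fun w => Real.log ‖w‖) z := analyticAt_id.harmonicAt_log_norm hz
  rw [lap_eq_laplacian h.1]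
  exact h.2.self_of_nhds

lemma lap_comp_norm_sq {G G' : ℝ → ℝ} {g'' : ℝ}
    (h₁ : ∀ᶠ s in 𝓝 (‖z‖ ^ 2), HasDerivAt G (G' s) s) (h₂ : HasDerivAt G' g'' (‖z‖ ^ 2)) :
    lap (fun w => G (‖w‖ ^ 2)) z = 4 * ‖z‖ ^ 2 * g'' + 4 * G' (‖z‖ ^ 2) := by
  have hsq (w : ℂ) : HasFDerivAt (fun w : ℂ => ‖w‖ ^ 2) (2 • innerSL ℝ w) w :=
    (hasStrictFDerivAt_norm_sq w).hasFDerivAt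
  have hG : ∀ᶠ w in 𝓝 z, HasFDerivAt (fun w => G (‖w‖ ^ 2)) (G' (‖w‖ ^ 2) • 2 • innerSL ℝ w) w := by
    filter_upwards [(continuous_norm.pow 2).continuousAt.eventually h₁] with w hw
    exact hw.comp_hasFDerivAt w (hsq w)
  have hG' := h₂.comp_hasFDerivAt z (hsq z)
  have hre : HasFDerivAt (fun w : ℂ => G' (‖w‖ ^ 2) * (2 * w.re))
      (G' (‖z‖ ^ 2) • (2 : ℝ) • Complex.reCLM + (2 * z.re) • g'' • 2 • innerSL ℝ z) z :=
    hG'.mul (Complex.reCLM.hasFDerivAt.const_mul 2)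
  have him : HasFDerivAt (fun w : ℂ => G' (‖w‖ ^ 2) * (2 * w.im))
      (G' (‖z‖ ^ 2) • (2 : ℝ) • Complex.imCLM + (2 * z.im) • g'' • 2 • innerSL ℝ z) z :=
    hG'.mul (Complex.imCLM.hasFDerivAt.const_mul 2)
  rw [lap_eq_of_hasFDerivAt hG (by simpa using hre) (by simpa using him)]
  simp only [add_apply, smul_apply, reCLM_apply, imCLM_apply, coe_innerSL_apply, Complex.inner,
    smul_eq_mul, nsmul_eq_mul, one_re, one_im, I_re, I_im, conj_re, conj_im, mul_re]
  rw [Complex.sq_norm, Complex.normSq_apply]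
  ring

lemma fderiv_fderiv_apply_nonpos_of_isLocalMax (hf : ContDiffAt ℝ 2 f z) (hmax : IsLocalMax f z)
    (v : ℂ) : fderiv ℝ (fun w => fderiv ℝ f w v) z v ≤ 0 := by
  have hline : ∀ t : ℝ, HasDerivAt (fun t : ℝ => z + t • v) v t := fun t => by
    simpa using ((hasDerivAt_id t).smul_const v).const_add z
  have hzero : z = z + (0 : ℝ) • v := by simp
  have hcont : Tendsto (fun t : ℝ => z + t • v) (𝓝 0) (𝓝 z) := by
    simpa using (hline 0).continuousAt.tendsto
  have hdiff : ∀ᶠ t in 𝓝 (0 : ℝ), DifferentiableAt ℝ f (z + t • v) :=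
    hcont.eventually ((hf.eventually (by simp)).mono fun w hw => hw.differentiableAt two_ne_zero)
  have hderiv : deriv (fun t : ℝ => f (z + t • v)) =ᶠ[𝓝 0]
      fun t => fderiv ℝ f (z + t • v) v := by
    filter_upwards [hdiff.eventually_nhds] with t ht
    exact (ht.self_of_nhds.hasFDerivAt.comp_hasDerivAt t (hline t)).deriv
  have hD : DifferentiableAt ℝ (fun w => fderiv ℝ f w v) z :=
    ((hf.fderiv_right (m := 1) le_rfl).differentiableAt one_ne_zero).clm_apply
      (differentiableAt_const v)
  have hsecond : HasDerivAt (fun t : ℝ => fderiv ℝ f (z + t • v) v)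
      (fderiv ℝ (fun w => fderiv ℝ f w v) z v) 0 :=
    hD.hasFDerivAt.comp_hasDerivAt_of_eq 0 (hline 0) hzero
  rw [← hsecond.deriv, ← hderiv.deriv_eq]
  exact deriv_deriv_nonpos_of_isLocalMax
    (hf.continuousAt.comp_of_eq (hline 0).continuousAt hzero.symm)
    (IsLocalMax.comp_continuous (g := fun t : ℝ => z + t • v) (hzero ▸ hmax)
      (hline 0).continuousAt)

lemma lap_nonpos_of_isLocalMax (hf : ContDiffAt ℝ 2 f z) (hmax : IsLocalMax f z) : lap f z ≤ 0 :=
  add_nonpos (fderiv_fderiv_apply_nonpos_of_isLocalMax hf hmax 1)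
    (fderiv_fderiv_apply_nonpos_of_isLocalMax hf hmax Complex.I)

end Laplacian

theorem exists_isMaxOn_of_tendsto_atBot_frontier {X : Type*} [MetricSpace X] [ProperSpace X]
    {Ω : Set X} {F : X → ℝ} (hb : Bornology.IsBounded Ω) (hne : Ω.Nonempty)
    (hF : ContinuousOn F Ω) (hfr : ∀ w ∈ frontier Ω, Tendsto F (𝓝[Ω] w) atBot) :
    ∃ z ∈ Ω, IsMaxOn F Ω z := by
  obtain ⟨z₀, hz₀⟩ := hne
  set S := {w ∈ Ω | F z₀ ≤ F w}
  have hSΩ : S ⊆ Ω := sep_subset _ _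
  have hclosed : IsClosed S := isClosed_of_closure_subset fun w hw => by
    have : (𝓝[S] w).NeBot := mem_closure_iff_nhdsWithin_neBot.mp hw
    have hlow : ∀ᶠ v in 𝓝[S] w, F z₀ ≤ F v := eventually_nhdsWithin_of_forall fun v hv => hv.2
    have hwΩ : w ∈ Ω := by
      by_contra hwΩ
      have hfw : w ∈ frontier Ω := ⟨closure_mono hSΩ hw, fun h => hwΩ (interior_subset h)⟩
      have hhigh := ((hfr w hfw).mono_left (nhdsWithin_mono _ hSΩ)).eventually
        (eventually_lt_atBot (F z₀))
      obtain ⟨v, hv₁, hv₂⟩ := (hlow.and hhigh).exists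
      exact hv₂.not_ge hv₁
    exact ⟨hwΩ, ge_of_tendsto ((hF w hwΩ).mono hSΩ) hlow⟩
  obtain ⟨z, hzS, hmax⟩ := (isCompact_of_isClosed_isBounded hclosed (hb.subset hSΩ)).exists_isMaxOn
    ⟨z₀, hz₀, le_rfl⟩ (hF.mono hSΩ)
  refine ⟨z, hzS.1, fun w hw => ?_⟩
  by_cases hwS : F z₀ ≤ F w
  · exact hmax ⟨hw, hwS⟩
  · exact (not_le.mp hwS).le.trans hzS.2

lemma norm_rpow_eq_sq_rpow (z : ℂ) (p : ℝ) : ‖z‖ ^ p = (‖z‖ ^ 2) ^ (p / 2) := by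
  rw [← Real.rpow_natCast, ← Real.rpow_mul (norm_nonneg z)]
  ring_nf

/- `log μ_{β,r}(w) = G (|w|²)` for the profile `G s = C + β/2 log s - log (R - s^(1+β))`, with
`C = log ((1+β) r^(1+β))` and `R = r^(2(1+β))`; these are `G'` and `G''`. -/
section profile

variable {β R s : ℝ}

lemma hasDerivAt_const_sub_rpow_one_add (hs : 0 < s) :
    HasDerivAt (fun s => R - s ^ (1 + β)) (-((1 + β) * s ^ β)) s := by
  simpa using (Real.hasDerivAt_rpow_const (p := 1 + β) (Or.inl hs.ne')).const_sub R

lemma hasDerivAt_log_muBetaR_profile (C : ℝ) (hs : 0 < s) (hsR : s ^ (1 + β) < R) :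
    HasDerivAt (fun s => C + β / 2 * Real.log s - Real.log (R - s ^ (1 + β)))
      (β / 2 * s⁻¹ + (1 + β) * s ^ β * (R - s ^ (1 + β))⁻¹) s := by
  refine ((((Real.hasDerivAt_log hs.ne').const_mul (β / 2)).const_add C).sub
    ((hasDerivAt_const_sub_rpow_one_add hs).log (by linarith))).congr_deriv ?_
  field_simp
  ring

lemma hasDerivAt_deriv_log_muBetaR_profile (hs : 0 < s) (hsR : s ^ (1 + β) < R) :
    HasDerivAt (fun s => β / 2 * s⁻¹ + (1 + β) * s ^ β * (R - s ^ (1 + β))⁻¹)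
      (-(β / 2) / s ^ 2 + (1 + β) * β * s ^ (β - 1) / (R - s ^ (1 + β))
        + ((1 + β) * s ^ β) ^ 2 / (R - s ^ (1 + β)) ^ 2) s := by
  refine (((hasDerivAt_inv hs.ne').const_mul _).add
    (((Real.hasDerivAt_rpow_const (Or.inl hs.ne')).const_mul (1 + β)).mul
      ((hasDerivAt_const_sub_rpow_one_add hs).inv (by linarith)))).congr_deriv ?_
  simp only [Pi.inv_apply]
  ring

end profile

/-- `μ_β(z/r)/r`, the counterpart of `μ_β` on the disk of radius `r`. -/
def muBetaR (β r : ℝ) (z : ℂ) : ℝ :=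
  (1 + β) * ‖z‖ ^ β * r ^ (1 + β) / (r ^ (2 * (1 + β)) - ‖z‖ ^ (2 * (1 + β)))

section muBetaR

variable {β r : ℝ} {z : ℂ}

lemma muBeta_eq_muBetaR_one (β : ℝ) : muBeta β = muBetaR β 1 := by
  funext z
  rw [muBeta, muBetaR, Real.one_rpow, Real.one_rpow, mul_one]

lemma norm_rpow_lt_rpow (hβ : -1 < β) (hz : ‖z‖ < r) : ‖z‖ ^ (2 * (1 + β)) < r ^ (2 * (1 + β)) :=
  Real.rpow_lt_rpow (norm_nonneg z) hz (by linarith)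

lemma muBetaR_pos (hβ : -1 < β) (hz₀ : z ≠ 0) (hz : ‖z‖ < r) : 0 < muBetaR β r z := by
  have hz₀' : 0 < ‖z‖ := norm_pos_iff.mpr hz₀
  have := Real.rpow_pos_of_pos hz₀' β
  have := Real.rpow_pos_of_pos (hz₀'.trans hz) (1 + β)
  have : 0 < 1 + β := by linarith
  exact div_pos (by positivity) (by linarith [norm_rpow_lt_rpow hβ hz])

lemma log_muBetaR_eq (hβ : -1 < β) (hz₀ : z ≠ 0) (hz : ‖z‖ < r) :
    Real.log (muBetaR β r z) = Real.log ((1 + β) * r ^ (1 + β)) + β / 2 * Real.log (‖z‖ ^ 2)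
      - Real.log (r ^ (2 * (1 + β)) - (‖z‖ ^ 2) ^ (1 + β)) := by
  have hz₀' : 0 < ‖z‖ := norm_pos_iff.mpr hz₀
  have : 0 < 1 + β := by linarith
  have := Real.rpow_pos_of_pos (hz₀'.trans hz) (1 + β)
  have hden := norm_rpow_lt_rpow hβ hz
  rw [norm_rpow_eq_sq_rpow z (2 * (1 + β)), mul_div_cancel_left₀ _ two_ne_zero] at hden
  rw [muBetaR, norm_rpow_eq_sq_rpow z β, norm_rpow_eq_sq_rpow z (2 * (1 + β)),
    mul_div_cancel_left₀ _ two_ne_zero, mul_right_comm, Real.log_div (by positivity) (by linarith),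
    Real.log_mul (by positivity) (by positivity), Real.log_rpow (by positivity)]

lemma muBetaR_sq_eq (hz : ‖z‖ < r) :
    muBetaR β r z ^ 2 = (1 + β) ^ 2 * (‖z‖ ^ 2) ^ β * r ^ (2 * (1 + β))
      / (r ^ (2 * (1 + β)) - (‖z‖ ^ 2) ^ (1 + β)) ^ 2 := by
  have hr : 0 ≤ r := (norm_nonneg z).trans hz.le
  have e₁ : (‖z‖ ^ β) ^ 2 = (‖z‖ ^ 2) ^ β := by
    rw [← Real.rpow_natCast, ← Real.rpow_mul (norm_nonneg z), mul_comm, Real.rpow_mul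
      (norm_nonneg z), Real.rpow_natCast]
  have e₂ : (r ^ (1 + β)) ^ 2 = r ^ (2 * (1 + β)) := by
    rw [← Real.rpow_natCast, ← Real.rpow_mul hr]; ring_nf
  rw [muBetaR, norm_rpow_eq_sq_rpow z (2 * (1 + β)), mul_div_cancel_left₀ _ two_ne_zero,
    div_pow, mul_pow, mul_pow, e₁, e₂]

lemma lap_log_muBetaR (hβ : -1 < β) (hz₀ : z ≠ 0) (hz : ‖z‖ < r) :
    lap (fun w => Real.log (muBetaR β r w)) z = 4 * muBetaR β r z ^ 2 := by
  have hlocal : (fun w => Real.log (muBetaR β r w)) =ᶠ[𝓝 z] fun w =>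
      Real.log ((1 + β) * r ^ (1 + β)) + β / 2 * Real.log (‖w‖ ^ 2)
        - Real.log (r ^ (2 * (1 + β)) - (‖w‖ ^ 2) ^ (1 + β)) := by
    filter_upwards [isOpen_ne.mem_nhds hz₀,
      (isOpen_lt continuous_norm continuous_const).mem_nhds hz] with w hw₀ hw
    using log_muBetaR_eq hβ hw₀ hw
  have hs₀ : 0 < ‖z‖ ^ 2 := by positivity
  have hsR : ∀ᶠ s in 𝓝 (‖z‖ ^ 2), 0 < s ∧ s ^ (1 + β) < r ^ (2 * (1 + β)) := by
    have hz' := norm_rpow_lt_rpow hβ hz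
    rw [norm_rpow_eq_sq_rpow z (2 * (1 + β)), mul_div_cancel_left₀ _ two_ne_zero] at hz'
    exact (eventually_gt_nhds hs₀).and ((Real.continuousAt_rpow_const _ _
      (Or.inl hs₀.ne')).eventually_lt continuousAt_const hz')
  obtain ⟨hs, hsa⟩ := hsR.self_of_nhds
  rw [lap_congr hlocal, lap_comp_norm_sq
    (hsR.mono fun s hs => hasDerivAt_log_muBetaR_profile _ hs.1 hs.2)
    (hasDerivAt_deriv_log_muBetaR_profile hs hsa), muBetaR_sq_eq hz]
  set R := r ^ (2 * (1 + β))
  have e₁ : (‖z‖ ^ 2) ^ (β - 1) = (‖z‖ ^ 2) ^ β / ‖z‖ ^ 2 := by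
    rw [Real.rpow_sub hs, Real.rpow_one]
  have e₂ : (‖z‖ ^ 2) ^ (1 + β) = ‖z‖ ^ 2 * (‖z‖ ^ 2) ^ β := by
    rw [Real.rpow_add hs, Real.rpow_one]
  have hden : R - ‖z‖ ^ 2 * (‖z‖ ^ 2) ^ β ≠ 0 := by rw [← e₂]; linarith
  rw [e₁, e₂]
  field_simp
  ring

lemma contDiffAt_muBetaR {n : WithTop ℕ∞} (hβ : -1 < β) (hz₀ : z ≠ 0) (hz : ‖z‖ < r) :
    ContDiffAt ℝ n (muBetaR β r) z := by
  have hnorm (p : ℝ) : ContDiffAt ℝ n (fun w : ℂ => ‖w‖ ^ p) z :=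
    (contDiffAt_norm ℝ hz₀).rpow_const_of_ne (norm_ne_zero_iff.mpr hz₀)
  exact ((contDiffAt_const.mul (hnorm β)).mul contDiffAt_const).div
    (contDiffAt_const.sub (hnorm _)) (sub_pos.mpr (norm_rpow_lt_rpow hβ hz)).ne'

lemma curv_muBetaR (hβ : -1 < β) (hz₀ : z ≠ 0) (hz : ‖z‖ < r) : curv (muBetaR β r) z = -4 := by
  have := (muBetaR_pos hβ hz₀ hz).ne'
  rw [curv, lap_log_muBetaR hβ hz₀ hz]
  field_simp

lemma le_muBetaR (hβ : -1 < β) (hz : ‖z‖ < r) :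
    (1 + β) / r ^ (1 + β) * ‖z‖ ^ β ≤ muBetaR β r z := by
  have hr : 0 < r := (norm_nonneg z).trans_lt hz
  have hra : 0 < r ^ (1 + β) := Real.rpow_pos_of_pos hr _
  have hsq : r ^ (2 * (1 + β)) = r ^ (1 + β) * r ^ (1 + β) := by
    rw [← Real.rpow_add hr]; ring_nf
  have hden := norm_rpow_lt_rpow hβ hz
  have : 0 ≤ (1 + β) * ‖z‖ ^ β * r ^ (1 + β) := by
    have := Real.rpow_nonneg (norm_nonneg z) β
    have : 0 < 1 + β := by linarith
    positivity
  calc (1 + β) / r ^ (1 + β) * ‖z‖ ^ β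
      = (1 + β) * ‖z‖ ^ β * r ^ (1 + β) / r ^ (2 * (1 + β)) := by
        rw [hsq]; field_simp
    _ ≤ muBetaR β r z := by
        unfold muBetaR
        gcongr
        exact sub_le_self _ (Real.rpow_nonneg (norm_nonneg z) _)

lemma tendsto_muBetaR_atTop (hβ : -1 < β) (hr : 0 < r) {w : ℂ} (hw : ‖w‖ = r) :
    Tendsto (muBetaR β r) (𝓝[{v | ‖v‖ < r}] w) atTop := by
  have hnorm (p : ℝ) : ContinuousAt (fun v : ℂ => ‖v‖ ^ p) w :=
    continuous_norm.continuousAt.rpow_const (Or.inl (hw ▸ hr.ne'))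
  have hnum : Tendsto (fun v : ℂ => (1 + β) * ‖v‖ ^ β * r ^ (1 + β)) (𝓝[{v | ‖v‖ < r}] w)
      (𝓝 ((1 + β) * r ^ β * r ^ (1 + β))) := by
    have hc : ContinuousAt (fun v : ℂ => (1 + β) * ‖v‖ ^ β * r ^ (1 + β)) w :=
      (continuousAt_const.mul (hnorm β)).mul continuousAt_const
    simpa [hw] using hc.tendsto.mono_left nhdsWithin_le_nhds
  have hden : Tendsto (fun v : ℂ => r ^ (2 * (1 + β)) - ‖v‖ ^ (2 * (1 + β)))
      (𝓝[{v | ‖v‖ < r}] w) (𝓝[>] 0) := by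
    refine tendsto_nhdsWithin_iff.mpr ⟨?_, eventually_nhdsWithin_of_forall fun v hv =>
      sub_pos.mpr (norm_rpow_lt_rpow hβ hv)⟩
    have hc : ContinuousAt (fun v : ℂ => r ^ (2 * (1 + β)) - ‖v‖ ^ (2 * (1 + β))) w :=
      continuousAt_const.sub (hnorm _)
    simpa [hw] using hc.tendsto.mono_left nhdsWithin_le_nhds
  have : 0 < 1 + β := by linarith
  exact hnum.pos_mul_atTop (by positivity) (tendsto_inv_nhdsGT_zero.comp hden)

end muBetaR

section muBeta

variable {β : ℝ}

lemma muBeta_zero (hβ : 0 < β) : muBeta β 0 = 0 := by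
  simp [muBeta, Real.zero_rpow hβ.ne']

lemma muBeta_denom_pos (hβ : -1 < β) {z : ℂ} (hz : z ∈ unitDisk) :
    0 < 1 - ‖z‖ ^ (2 * (1 + β)) := by
  have := norm_rpow_lt_rpow hβ (r := 1) hz
  rwa [Real.one_rpow, ← sub_pos] at this

lemma continuousOn_muBeta (hβ : 0 ≤ β) : ContinuousOn (muBeta β) unitDisk := by
  have hnorm (p : ℝ) (hp : 0 ≤ p) : Continuous fun w : ℂ => ‖w‖ ^ p :=
    continuous_norm.rpow_const fun _ => Or.inr hp
  exact ((continuous_const.mul (hnorm β hβ)).continuousOn).div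
    (continuous_const.sub (hnorm _ (by linarith))).continuousOn
    fun z hz => (muBeta_denom_pos (by linarith) hz).ne'

lemma isConfPseudometric_muBeta (hβ : 0 < β) : IsConfPseudometric (muBeta β) where
  cont := continuousOn_muBeta hβ.le
  nonneg z hz := by
    have := Real.rpow_nonneg (norm_nonneg z) β
    exact div_nonneg (by positivity) (muBeta_denom_pos (by linarith) hz).le
  smooth := by
    rintro z ⟨hz, hpos⟩
    have hz₀ : z ≠ 0 := by
      rintro rfl
      exact hpos.ne' (muBeta_zero hβ)
    rw [muBeta_eq_muBetaR_one]
    exact (contDiffAt_muBetaR (by linarith) hz₀ hz).contDiffWithinAt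

lemma hasZeroOrder_muBeta (hβ : 0 < β) : HasZeroOrder (muBeta β) 0 β := by
  refine Or.inr ⟨hβ, muBeta_zero hβ, 1 + β, by linarith, ?_⟩
  have hlim : Tendsto (fun z : ℂ => (1 + β) / (1 - ‖z‖ ^ (2 * (1 + β)))) (𝓝 0) (𝓝 (1 + β)) := by
    have hc : ContinuousAt (fun z : ℂ => (1 + β) / (1 - ‖z‖ ^ (2 * (1 + β)))) 0 :=
      continuousAt_const.div (continuousAt_const.sub
        (continuous_norm.continuousAt.rpow_const (Or.inr (by linarith))))
        (muBeta_denom_pos (by linarith) (by simp [unitDisk])).ne'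
    simpa [Real.zero_rpow (by linarith : 2 * (1 + β) ≠ 0)] using hc.tendsto
  refine (hlim.mono_left nhdsWithin_le_nhds).congr' ?_
  filter_upwards [self_mem_nhdsWithin] with z hz
  have := Real.rpow_pos_of_pos (norm_pos_iff.mpr hz) β
  rw [sub_zero, muBeta]
  field_simp

end muBeta

namespace IsConfPseudometric

variable {lam : ℂ → ℝ}

lemma isOpen_pos (hconf : IsConfPseudometric lam) : IsOpen {w | w ∈ unitDisk ∧ 0 < lam w} :=
  hconf.cont.isOpen_inter_preimage (isOpen_lt continuous_norm continuous_const) isOpen_Ioi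

lemma contDiffAt_log (hconf : IsConfPseudometric lam) {w : ℂ} (hw : w ∈ unitDisk)
    (hpos : 0 < lam w) : ContDiffAt ℝ 2 (fun v => Real.log (lam v)) w :=
  (hconf.smooth.contDiffAt (hconf.isOpen_pos.mem_nhds ⟨hw, hpos⟩)).log hpos.ne'

lemma bddAbove_image_closedBall (hconf : IsConfPseudometric lam) {r : ℝ} (hr : r < 1) :
    BddAbove (lam '' closedBall 0 r) :=
  (isCompact_closedBall 0 r).bddAbove_image
    (hconf.cont.mono fun _ hw => (mem_closedBall_zero_iff.mp hw).trans_lt hr)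

end IsConfPseudometric

def perturbedLogRatio (lam : ℂ → ℝ) (β r δ : ℝ) (w : ℂ) : ℝ :=
  Real.log (lam w) - Real.log (muBetaR β r w) + δ * Real.log ‖w‖

def punctDiskPosSet (lam : ℂ → ℝ) (r : ℝ) : Set ℂ := {w | ‖w‖ < r ∧ w ≠ 0 ∧ 0 < lam w}

section Comparison

variable {lam : ℂ → ℝ} {β r δ : ℝ}

lemma isOpen_punctDiskPosSet (hconf : IsConfPseudometric lam) (hr : r ≤ 1) :
    IsOpen (punctDiskPosSet lam r) :=
  isOpen_iff_mem_nhds.mpr fun w ⟨hw, hw₀, hpos⟩ => by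
    filter_upwards [(isOpen_lt continuous_norm continuous_const).mem_nhds hw,
      isOpen_ne.mem_nhds hw₀, hconf.isOpen_pos.mem_nhds ⟨hw.trans_le hr, hpos⟩]
      with v hv hv₀ hvpos using ⟨hv, hv₀, hvpos.2⟩

lemma contDiffAt_perturbedLogRatio (hconf : IsConfPseudometric lam) (hβ : -1 < β) (hr : r ≤ 1)
    {w : ℂ} (hw : w ∈ punctDiskPosSet lam r) : ContDiffAt ℝ 2 (perturbedLogRatio lam β r δ) w :=
  ((hconf.contDiffAt_log (hw.1.trans_le hr) hw.2.2).sub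
    ((contDiffAt_muBetaR hβ hw.2.1 hw.1).log (muBetaR_pos hβ hw.2.1 hw.1).ne')).add
    (contDiffAt_const.mul ((contDiffAt_norm ℝ hw.2.1).log (norm_ne_zero_iff.mpr hw.2.1)))

lemma tendsto_perturbedLogRatio_zero (hβ : -1 < β) (hr : 0 < r) (hδ : 0 < δ) {L : ℝ}
    (hL : Tendsto (fun v => lam v / ‖v - 0‖ ^ β) (𝓝[≠] 0) (𝓝 L)) :
    Tendsto (perturbedLogRatio lam β r δ) (𝓝[punctDiskPosSet lam r] 0) atBot := by
  have hΩ : 𝓝[punctDiskPosSet lam r] (0 : ℂ) ≤ 𝓝[≠] 0 := nhdsWithin_mono _ fun v hv => hv.2.1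
  set K := (1 + β) / r ^ (1 + β)
  have hK : 0 < K := div_pos (by linarith) (Real.rpow_pos_of_pos hr _)
  have hbound : ∀ᶠ v in 𝓝[punctDiskPosSet lam r] 0,
      Real.log (lam v) - Real.log (muBetaR β r v) ≤ Real.log ((|L| + 1) / K) := by
    filter_upwards [hΩ (hL.eventually (eventually_lt_nhds ((le_abs_self L).trans_lt
      (lt_add_one _)))), self_mem_nhdsWithin] with v hv ⟨hvr, hv₀, hpos⟩
    have hvβ : 0 < ‖v‖ ^ β := Real.rpow_pos_of_pos (norm_pos_iff.mpr hv₀) β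
    rw [sub_zero, div_lt_iff₀ hvβ] at hv
    rw [← Real.log_div hpos.ne' (muBetaR_pos hβ hv₀ hvr).ne']
    refine Real.log_le_log (div_pos hpos (muBetaR_pos hβ hv₀ hvr)) ?_
    rw [div_le_div_iff₀ (muBetaR_pos hβ hv₀ hvr) hK]
    nlinarith [le_muBetaR hβ hvr, abs_nonneg L]
  have hlog : Tendsto (fun v : ℂ => δ * Real.log ‖v‖) (𝓝[punctDiskPosSet lam r] 0) atBot :=
    (Real.tendsto_log_nhdsGT_zero.comp (tendsto_norm_nhdsNE_zero.mono_left hΩ)).const_mul_atBot hδ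
  exact tendsto_atBot_add_left_of_ge' _ _ hbound hlog

lemma tendsto_perturbedLogRatio_of_eq_zero (hconf : IsConfPseudometric lam) (hβ : -1 < β)
    (hr : r ≤ 1) {w : ℂ} (hw₀ : w ≠ 0) (hw : ‖w‖ < r) (hlam : lam w = 0) :
    Tendsto (perturbedLogRatio lam β r δ) (𝓝[punctDiskPosSet lam r] w) atBot := by
  have hlam₀ : Tendsto lam (𝓝[punctDiskPosSet lam r] w) (𝓝[>] 0) := by
    refine tendsto_nhdsWithin_iff.mpr ⟨?_, eventually_nhdsWithin_of_forall fun v hv => hv.2.2⟩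
    have := (hconf.cont.continuousAt ((isOpen_lt continuous_norm continuous_const).mem_nhds
      (hw.trans_le hr))).tendsto
    rw [hlam] at this
    exact this.mono_left nhdsWithin_le_nhds
  have hrest : ContinuousAt (fun v => -Real.log (muBetaR β r v) + δ * Real.log ‖v‖) w :=
    ((contDiffAt_muBetaR (n := 0) hβ hw₀ hw).continuousAt.log
      (muBetaR_pos hβ hw₀ hw).ne').neg.add
      (continuousAt_const.mul (continuous_norm.continuousAt.log (norm_ne_zero_iff.mpr hw₀)))
  refine ((Real.tendsto_log_nhdsGT_zero.comp hlam₀).atBot_add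
    (hrest.tendsto.mono_left nhdsWithin_le_nhds)).congr fun v => ?_
  simp only [perturbedLogRatio, Function.comp_apply]
  ring

lemma tendsto_perturbedLogRatio_of_norm_eq (hconf : IsConfPseudometric lam) (hβ : -1 < β)
    (hr₀ : 0 < r) (hr : r < 1) (hδ : 0 ≤ δ) {w : ℂ} (hw : ‖w‖ = r) :
    Tendsto (perturbedLogRatio lam β r δ) (𝓝[punctDiskPosSet lam r] w) atBot := by
  obtain ⟨M, hM⟩ := hconf.bddAbove_image_closedBall hr
  have hbound : ∀ᶠ v in 𝓝[punctDiskPosSet lam r] w,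
      Real.log (lam v) + δ * Real.log ‖v‖ ≤ Real.log M := by
    filter_upwards [self_mem_nhdsWithin] with v ⟨hvr, hv₀, hpos⟩
    have h₁ := Real.log_le_log hpos (hM (mem_image_of_mem lam (mem_closedBall_zero_iff.mpr hvr.le)))
    have h₂ := mul_nonpos_of_nonneg_of_nonpos hδ
      (Real.log_nonpos (norm_nonneg v) (hvr.trans hr).le)
    linarith
  have hμ : Tendsto (fun v => -Real.log (muBetaR β r v)) (𝓝[punctDiskPosSet lam r] w) atBot :=
    tendsto_neg_atTop_atBot.comp (Real.tendsto_log_atTop.comp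
      ((tendsto_muBetaR_atTop hβ hr₀ hw).mono_left (nhdsWithin_mono _ fun v hv => hv.1)))
  refine (tendsto_atBot_add_left_of_ge' _ _ hbound hμ).congr fun v => ?_
  simp only [perturbedLogRatio]
  ring

lemma tendsto_perturbedLogRatio_frontier (hconf : IsConfPseudometric lam) (hβ : -1 < β)
    (hr₀ : 0 < r) (hr : r < 1) (hδ : 0 < δ) {L : ℝ}
    (hL : Tendsto (fun v => lam v / ‖v - 0‖ ^ β) (𝓝[≠] 0) (𝓝 L)) {w : ℂ}
    (hw : w ∈ frontier (punctDiskPosSet lam r)) :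
    Tendsto (perturbedLogRatio lam β r δ) (𝓝[punctDiskPosSet lam r] w) atBot := by
  have hwr : ‖w‖ ≤ r := by
    have := closure_mono (fun v hv => mem_closedBall_zero_iff.mpr (le_of_lt hv.1)) hw.1
    rwa [isClosed_closedBall.closure_eq, mem_closedBall_zero_iff] at this
  have hwΩ : w ∉ punctDiskPosSet lam r := fun h =>
    hw.2 ((isOpen_punctDiskPosSet hconf hr.le).interior_eq.symm ▸ h)
  rcases eq_or_ne w 0 with rfl | hw₀
  · exact tendsto_perturbedLogRatio_zero hβ hr₀ hδ hL
  rcases hwr.lt_or_eq with hwr | hwr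
  · refine tendsto_perturbedLogRatio_of_eq_zero hconf hβ hr.le hw₀ hwr ?_
    exact le_antisymm (not_lt.mp fun hpos => hwΩ ⟨hwr, hw₀, hpos⟩) (hconf.nonneg w (hwr.trans hr))
  · exact tendsto_perturbedLogRatio_of_norm_eq hconf hβ hr₀ hr hδ.le hwr

lemma lap_perturbedLogRatio (hconf : IsConfPseudometric lam) (hβ : -1 < β) (hr : r ≤ 1) {z : ℂ}
    (hz : z ∈ punctDiskPosSet lam r) :
    lap (perturbedLogRatio lam β r δ) z
      = lap (fun w => Real.log (lam w)) z - 4 * muBetaR β r z ^ 2 := by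
  obtain ⟨hzr, hz₀, hpos⟩ := hz
  have hu := hconf.contDiffAt_log (hzr.trans_le hr) hpos
  have hv : ContDiffAt ℝ 2 (fun w => Real.log (muBetaR β r w)) z :=
    (contDiffAt_muBetaR hβ hz₀ hzr).log (muBetaR_pos hβ hz₀ hzr).ne'
  have hh : ContDiffAt ℝ 2 (fun w : ℂ => Real.log ‖w‖) z :=
    (contDiffAt_norm ℝ hz₀).log (norm_ne_zero_iff.mpr hz₀)
  have huv : ContDiffAt ℝ 2 ((fun w => Real.log (lam w)) - fun w => Real.log (muBetaR β r w)) z :=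
    hu.sub hv
  have hδh : ContDiffAt ℝ 2 (δ • fun w : ℂ => Real.log ‖w‖) z := hh.const_smul δ
  have hF : perturbedLogRatio lam β r δ = (fun w => Real.log (lam w))
      - (fun w => Real.log (muBetaR β r w)) + δ • fun w : ℂ => Real.log ‖w‖ := rfl
  rw [hF, lap_eq_laplacian (f := _ + _) (huv.add hδh), huv.laplacian_add hδh,
    hu.laplacian_sub hv, laplacian_smul δ hh,
    ← lap_eq_laplacian hu, ← lap_eq_laplacian hv, ← lap_eq_laplacian hh,
    lap_log_muBetaR hβ hz₀ hzr, lap_log_norm hz₀, smul_zero, add_zero]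

lemma perturbedLogRatio_nonpos_of_isLocalMax (hconf : IsConfPseudometric lam)
    (hcurv : ∀ z ∈ unitDisk, 0 < lam z → curv lam z ≤ -4) (hβ : -1 < β) (hr : r ≤ 1)
    (hδ : 0 ≤ δ) {z : ℂ} (hz : z ∈ punctDiskPosSet lam r)
    (hmax : IsLocalMax (perturbedLogRatio lam β r δ) z) : perturbedLogRatio lam β r δ z ≤ 0 := by
  obtain ⟨hzr, hz₀, hpos⟩ := hz
  have hzD : z ∈ unitDisk := hzr.trans_le hr
  have hμ := muBetaR_pos hβ hz₀ hzr
  have hle : lam z ≤ muBetaR β r z := by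
    by_contra! hlt
    have hlap := lap_nonpos_of_isLocalMax
      (contDiffAt_perturbedLogRatio hconf hβ hr ⟨hzr, hz₀, hpos⟩) hmax
    rw [lap_perturbedLogRatio hconf hβ hr ⟨hzr, hz₀, hpos⟩] at hlap
    have hκ := hcurv z hzD hpos
    rw [curv, div_le_iff₀ (by positivity)] at hκ
    nlinarith
  have h₁ := Real.log_le_log hpos hle
  have h₂ := mul_nonpos_of_nonneg_of_nonpos hδ (Real.log_nonpos (norm_nonneg z) hzD.le)
  rw [perturbedLogRatio]
  linarith

lemma perturbedLogRatio_nonpos (hconf : IsConfPseudometric lam)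
    (hcurv : ∀ z ∈ unitDisk, 0 < lam z → curv lam z ≤ -4) (hβ : -1 < β) (hr₀ : 0 < r)
    (hr : r < 1) (hδ : 0 < δ) {L : ℝ} (hL : Tendsto (fun v => lam v / ‖v - 0‖ ^ β) (𝓝[≠] 0) (𝓝 L))
    {z : ℂ} (hz : z ∈ punctDiskPosSet lam r) : perturbedLogRatio lam β r δ z ≤ 0 := by
  obtain ⟨z₁, hz₁, hmax⟩ := exists_isMaxOn_of_tendsto_atBot_frontier
    (isBounded_ball.subset fun v hv => mem_ball_zero_iff.mpr hv.1) ⟨z, hz⟩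
    (fun w hw => (contDiffAt_perturbedLogRatio hconf hβ hr.le hw).continuousAt.continuousWithinAt)
    (fun w hw => tendsto_perturbedLogRatio_frontier hconf hβ hr₀ hr hδ hL hw)
  exact (hmax hz).trans (perturbedLogRatio_nonpos_of_isLocalMax hconf hcurv hβ hr.le hδ.le hz₁
    (hmax.isLocalMax ((isOpen_punctDiskPosSet hconf hr.le).mem_nhds hz₁)))

lemma le_muBetaR_of_curv_le (hconf : IsConfPseudometric lam)
    (hcurv : ∀ z ∈ unitDisk, 0 < lam z → curv lam z ≤ -4) (hβ : -1 < β) (hr : r < 1) {L : ℝ}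
    (hL : Tendsto (fun v => lam v / ‖v - 0‖ ^ β) (𝓝[≠] 0) (𝓝 L)) {z : ℂ} (hz₀ : z ≠ 0)
    (hzr : ‖z‖ < r) : lam z ≤ muBetaR β r z := by
  have hμ := muBetaR_pos hβ hz₀ hzr
  rcases le_or_gt (lam z) 0 with hneg | hpos
  · linarith
  have hr₀ : 0 < r := (norm_nonneg z).trans_lt hzr
  have hδ : ∀ᶠ δ in 𝓝[>] (0 : ℝ),
      Real.log (lam z) - Real.log (muBetaR β r z) ≤ δ * -Real.log ‖z‖ :=
    eventually_nhdsWithin_of_forall fun δ hδ => by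
      have := perturbedLogRatio_nonpos hconf hcurv hβ hr₀ hr hδ hL ⟨hzr, hz₀, hpos⟩
      rw [perturbedLogRatio] at this
      linarith
  have hlim : Tendsto (fun δ : ℝ => δ * -Real.log ‖z‖) (𝓝[>] 0) (𝓝 0) :=
    ((continuous_mul_const _).tendsto' 0 0 (zero_mul _)).mono_left nhdsWithin_le_nhds
  have := ge_of_tendsto hlim hδ
  exact (Real.log_le_log_iff hpos hμ).mp (by linarith)

lemma continuousAt_muBetaR_radius (hβ : -1 < β) {z : ℂ} (hz : z ∈ unitDisk) :
    ContinuousAt (fun r => muBetaR β r z) 1 := by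
  have hpow (p : ℝ) : ContinuousAt (fun r : ℝ => r ^ p) 1 :=
    continuousAt_id.rpow_const (Or.inl one_ne_zero)
  exact (continuousAt_const.mul (hpow _)).div ((hpow _).sub continuousAt_const)
    (by simpa using (muBeta_denom_pos hβ hz).ne')

lemma le_muBeta_of_curv_le (hβ : 0 < β) (hconf : IsConfPseudometric lam)
    (hcurv : ∀ z ∈ unitDisk, 0 < lam z → curv lam z ≤ -4) (hord : HasZeroOrder lam 0 β) {z : ℂ}
    (hz : z ∈ unitDisk) : lam z ≤ muBeta β z := by
  obtain ⟨hβ₀, -⟩ | ⟨-, hlam₀, L, -, hL⟩ := hord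
  · exact absurd hβ₀ hβ.ne'
  rcases eq_or_ne z 0 with rfl | hz₀
  · rw [hlam₀, muBeta_zero hβ]
  have hlim : Tendsto (fun r => muBetaR β r z) (𝓝[<] 1) (𝓝 (muBeta β z)) := by
    rw [muBeta_eq_muBetaR_one]
    exact (continuousAt_muBetaR_radius (by linarith) hz).tendsto.mono_left nhdsWithin_le_nhds
  refine ge_of_tendsto hlim ?_
  filter_upwards [Ioo_mem_nhdsLT hz] with r ⟨hzr, hr⟩
  exact le_muBetaR_of_curv_le hconf hcurv (by linarith) hr hL hz₀ hzr

end Comparison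

/-- **Maximality of `μ_β`.**  For `β > 0`, `μ_β(z) = (1+β)|z|^β/(1-|z|^{2(1+β)})` is a
conformal pseudometric on `𝔻` with constant curvature `-4` and an isolated zero of order
`β` at `0`, and every conformal pseudometric `λ` on `𝔻` with `κ_λ ≤ -4` and a zero of
order `β` at `0` satisfies `λ ≤ μ_β` on `𝔻`. -/
theorem muBeta_maximal (β : ℝ) (hβ : 0 < β) :
    IsConfPseudometric (muBeta β) ∧
    (∀ z ∈ unitDisk, z ≠ 0 → 0 < muBeta β z ∧ curv (muBeta β) z = -4) ∧
    HasZeroOrder (muBeta β) 0 β ∧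
    ∀ lam : ℂ → ℝ, IsConfPseudometric lam →
      (∀ z ∈ unitDisk, 0 < lam z → curv lam z ≤ -4) →
      HasZeroOrder lam 0 β →
      ∀ z ∈ unitDisk, lam z ≤ muBeta β z := by
  refine ⟨isConfPseudometric_muBeta hβ, fun z hz hz₀ => ?_, hasZeroOrder_muBeta hβ,
    fun lam hconf hcurv hord z hz => le_muBeta_of_curv_le hβ hconf hcurv hord hz⟩
  rw [muBeta_eq_muBetaR_one]
  exact ⟨muBetaR_pos (by linarith) hz₀ hz, curv_muBetaR (by linarith) hz₀ hz⟩
end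
end
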